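/- Let ν ∈ ℝ, a > 0, m ∈ ℕ, λ = (ν + 2m)/a with λ > -1, and let f_l(r) = (2^{λ+1} l! / (a^λ Γ(λ + l + 1)))^{1/2} r^m L_l^{(λ)}((2/a) r^a) e^{-(1/a) r^a}. Then for every l ∈ ℕ and r > 0, (1/a)( r^a f_l(r) - r^{-a}( r² f_l''(r) + (ν + 1) r f_l'(r) - m(ν + m) f_l(r) ) ) = (λ + 2l + 1) f_l(r); that is, f_l is an eigenfunction of the operator π(𝐤) = (1/a)(r^a - r^{-a}(ϑ - m)(ϑ + ν + m)) with eigenvalue λ + 2l + 1. -/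

import Mathlib

open Real

/-- The generalized Laguerre polynomial
`L_l^{(λ)}(t) = ∑_{j=0}^{l} ((-1)^j / (j!(l-j)!)) (Γ(λ+l+1)/Γ(λ+j+1)) t^j`. -/
noncomputable def laguerre (lam : ℝ) (l : ℕ) (t : ℝ) : ℝ :=
  ∑ j ∈ Finset.range (l + 1),
    (-1 : ℝ) ^ j / (j.factorial * (l - j).factorial) *
      (Real.Gamma (lam + l + 1) / Real.Gamma (lam + j + 1)) * t ^ j

/-- `f_l(r) = (2^{λ+1} l!/(a^λ Γ(λ+l+1)))^{1/2} r^m L_l^{(λ)}((2/a) r^a) e^{-(1/a) r^a}`. -/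
noncomputable def laguerreFun (ν a : ℝ) (m : ℕ) (l : ℕ) (r : ℝ) : ℂ :=
  ((Real.sqrt ((2 : ℝ) ^ ((ν + 2 * m) / a + 1) * l.factorial /
        (a ^ ((ν + 2 * m) / a) * Real.Gamma ((ν + 2 * m) / a + l + 1))) *
      r ^ m * laguerre ((ν + 2 * m) / a) l ((2 / a) * r ^ a) *
      Real.exp (-(1 / a) * r ^ a) : ℝ) : ℂ)

/-! Up to its normalising constant, `f_l(r) = ∑ⱼ cⱼ (2/a)ʲ r^(m+aj) e^(-r^a/a)` for `r > 0`,
where the `cⱼ` are the coefficients of `L_l^(λ)`. The operator `π(𝐤)` sends `r^μ e^(-r^a/a)` to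
`((2μ + a + ν) r^μ - (μ - m)(μ + m + ν) r^(μ-a)) e^(-r^a/a) / a`, so on the `j`-th term it acts
by the scalar `λ + 2l + 1` plus an excess `2(j - l)` and a lower term
`-a j (λ + j) r^(m+a(j-1)) e^(-r^a/a)`. The recursion `(j + 1)(λ + j + 1) c_{j+1} = -(l - j) cⱼ`
of the Laguerre coefficients makes the lower terms cancel the excess. -/

open Finset Filter Topology

noncomputable def rpowExp (a μ r : ℝ) : ℝ := r ^ μ * exp (-(1 / a) * r ^ a)

lemma hasDerivAt_rpowExp {a : ℝ} (ha : a ≠ 0) (μ : ℝ) {r : ℝ} (hr : 0 < r) :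
    HasDerivAt (rpowExp a μ) (μ * rpowExp a (μ - 1) r - rpowExp a (μ + a - 1) r) r := by
  have hpow (s : ℝ) : HasDerivAt (fun x => x ^ s) (s * r ^ (s - 1)) r :=
    hasDerivAt_rpow_const (Or.inl hr.ne')
  refine ((hpow μ).fun_mul ((hpow a).const_mul (-(1 / a))).exp).congr_deriv ?_
  simp only [rpowExp, rpow_add hr, rpow_sub hr, rpow_one]
  field_simp
  ring

lemma contDiffAt_rpowExp (a μ : ℝ) {r : ℝ} (hr : 0 < r) : ContDiffAt ℝ 2 (rpowExp a μ) r := by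
  unfold rpowExp
  fun_prop (disch := exact hr.ne')

lemma deriv_deriv_rpowExp {a : ℝ} (ha : a ≠ 0) (μ : ℝ) {r : ℝ} (hr : 0 < r) :
    deriv (deriv (rpowExp a μ)) r =
      μ * ((μ - 1) * rpowExp a (μ - 2) r - rpowExp a (μ + a - 2) r) -
        ((μ + a - 1) * rpowExp a (μ + a - 2) r - rpowExp a (μ + 2 * a - 2) r) := by
  have hderiv : deriv (rpowExp a μ) =ᶠ[𝓝 r]
      fun x => μ * rpowExp a (μ - 1) x - rpowExp a (μ + a - 1) x := by
    filter_upwards [Ioi_mem_nhds hr] with x hx using (hasDerivAt_rpowExp ha μ hx).deriv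
  rw [hderiv.deriv_eq, (((hasDerivAt_rpowExp ha (μ - 1) hr).const_mul μ).fun_sub
    (hasDerivAt_rpowExp ha (μ + a - 1) hr)).deriv]
  ring_nf

lemma deriv_ofReal_comp (F : ℝ → ℝ) :
    deriv (fun x => (F x : ℂ)) = fun x => ((deriv F x : ℝ) : ℂ) := by
  funext x
  by_cases h : DifferentiableAt ℝ F x
  · exact h.hasDerivAt.ofReal_comp.deriv
  · have h' : ¬ DifferentiableAt ℝ (fun x => (F x : ℂ)) x := fun h' =>
      h ((Complex.reCLM.differentiableAt.comp x h').congr_of_eventuallyEq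
        (by simp [Function.comp_def]))
    rw [deriv_zero_of_not_differentiableAt h, deriv_zero_of_not_differentiableAt h']
    simp

lemma deriv_deriv_fun_sum {𝕜 E ι : Type*} [NontriviallyNormedField 𝕜] [NormedAddCommGroup E]
    [NormedSpace 𝕜 E] (s : Finset ι) {f : ι → 𝕜 → E} {r : 𝕜}
    (hf : ∀ i ∈ s, ContDiffAt 𝕜 2 (f i) r) :
    deriv (deriv fun x => ∑ i ∈ s, f i x) r = ∑ i ∈ s, deriv (deriv (f i)) r := by
  have hnear : ∀ᶠ x in 𝓝 r, ∀ i ∈ s, ContDiffAt 𝕜 2 (f i) x :=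
    (eventually_all_finset s).2 fun i hi => (hf i hi).eventually (by simp)
  have hderiv : deriv (fun x => ∑ i ∈ s, f i x) =ᶠ[𝓝 r] fun x => ∑ i ∈ s, deriv (f i) x :=
    hnear.mono fun x hx => deriv_fun_sum fun i hi => (hx i hi).differentiableAt (by simp)
  rw [hderiv.deriv_eq]
  exact deriv_fun_sum fun i hi =>
    ((hf i hi).derivWithin (m := 1) (by norm_num)).differentiableAt (by simp)

-- The paper's `π(𝐤)`, acting on real-valued functions.
noncomputable def radialOp (ν a m : ℝ) (f : ℝ → ℝ) (r : ℝ) : ℝ :=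
  (1 / a) * (r ^ a * f r -
    r ^ (-a) * (r ^ 2 * deriv (deriv f) r + (ν + 1) * r * deriv f r - m * (ν + m) * f r))

section radialOp

variable (ν a m : ℝ)

lemma radialOp_const_mul (c : ℝ) (f : ℝ → ℝ) (r : ℝ) :
    radialOp ν a m (fun x => c * f x) r = c * radialOp ν a m f r := by
  simp only [radialOp, deriv_const_mul_field']
  ring

lemma radialOp_sum {ι : Type*} (s : Finset ι) {f : ι → ℝ → ℝ} {r : ℝ}
    (hf : ∀ i ∈ s, ContDiffAt ℝ 2 (f i) r) :
    radialOp ν a m (fun x => ∑ i ∈ s, f i x) r = ∑ i ∈ s, radialOp ν a m (f i) r := by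
  simp only [radialOp, deriv_deriv_fun_sum s hf,
    deriv_fun_sum fun i hi => (hf i hi).differentiableAt (by simp), mul_sum, ← sum_sub_distrib,
    ← sum_add_distrib]

variable {a}

lemma radialOp_rpowExp (ha : a ≠ 0) (μ : ℝ) {r : ℝ} (hr : 0 < r) :
    radialOp ν a m (rpowExp a μ) r =
      ((2 * μ + a + ν) * rpowExp a μ r - (μ - m) * (μ + m + ν) * rpowExp a (μ - a) r) / a := by
  rw [radialOp, deriv_deriv_rpowExp ha μ hr, (hasDerivAt_rpowExp ha μ hr).deriv]
  simp only [rpowExp, two_mul, rpow_add hr, rpow_sub hr, rpow_neg hr.le, rpow_one, rpow_two]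
  field_simp
  ring

end radialOp

noncomputable def laguerreCoeff (lam : ℝ) (l j : ℕ) : ℝ :=
  (-1 : ℝ) ^ j / (j.factorial * (l - j).factorial) *
    (Real.Gamma (lam + l + 1) / Real.Gamma (lam + j + 1))

lemma laguerreCoeff_succ {lam : ℝ} (hlam : -1 < lam) {l j : ℕ} (hj : j < l) :
    (j + 1) * (lam + j + 1) * laguerreCoeff lam l (j + 1) = -(l - j) * laguerreCoeff lam l j := by
  have hpos : 0 < lam + j + 1 := by linarith [(j.cast_nonneg : (0 : ℝ) ≤ j)]
  have hGamma : Real.Gamma (lam + (j + 1 : ℕ) + 1) = (lam + j + 1) * Real.Gamma (lam + j + 1) := by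
    rw [← Real.Gamma_add_one hpos.ne']
    push_cast
    ring_nf
  have hfact : (l - j).factorial = (l - j) * (l - (j + 1)).factorial := by
    rw [show l - j = l - (j + 1) + 1 by omega, Nat.factorial_succ]
  have hΓ := (Real.Gamma_pos_of_pos hpos).ne'
  have hlj : (l : ℝ) - j ≠ 0 := sub_ne_zero.2 (by exact_mod_cast hj.ne')
  rw [laguerreCoeff, laguerreCoeff, hGamma, hfact, Nat.factorial_succ]
  push_cast [Nat.cast_sub hj.le, Nat.cast_sub (Nat.succ_le_of_lt hj)]
  field_simp
  ring

noncomputable def laguerreRadial (a lam m : ℝ) (l : ℕ) (r : ℝ) : ℝ :=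
  ∑ j ∈ range (l + 1), laguerreCoeff lam l j * (2 / a) ^ j * rpowExp a (m + a * j) r

lemma pow_mul_laguerre_mul_exp {r : ℝ} (hr : 0 < r) (a lam : ℝ) (m l : ℕ) :
    r ^ m * laguerre lam l (2 / a * r ^ a) * exp (-(1 / a) * r ^ a) =
      laguerreRadial a lam m l r := by
  simp only [laguerre, laguerreRadial, laguerreCoeff, rpowExp, mul_sum, sum_mul]
  refine sum_congr rfl fun j _ => ?_
  rw [rpow_add hr, rpow_natCast, rpow_mul hr.le, rpow_natCast, mul_pow]
  ring

lemma radialOp_laguerreRadial (ν : ℝ) {a lam m : ℝ} (ha : a ≠ 0) (hlam : -1 < lam)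
    (hν : a * lam = ν + 2 * m) (l : ℕ) {r : ℝ} (hr : 0 < r) :
    radialOp ν a m (laguerreRadial a lam m l) r =
      (lam + 2 * l + 1) * laguerreRadial a lam m l r := by
  set d : ℕ → ℝ := fun j => laguerreCoeff lam l j * (2 / a) ^ j
  set M : ℝ → ℝ := fun μ => rpowExp a μ r
  have hrec (j : ℕ) (hj : j < l) :
      a * (j + 1 : ℕ) * (lam + (j + 1 : ℕ)) * d (j + 1) = (2 * j - 2 * l) * d j := by
    calc a * (j + 1 : ℕ) * (lam + (j + 1 : ℕ)) * d (j + 1)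
        = 2 * (2 / a) ^ j * ((j + 1) * (lam + j + 1) * laguerreCoeff lam l (j + 1)) := by
          simp only [d, pow_succ]
          push_cast
          field_simp
          ring
      _ = (2 * j - 2 * l) * d j := by
          rw [laguerreCoeff_succ hlam hj]
          ring
  have hterm (j : ℕ) : radialOp ν a m (fun x => d j * rpowExp a (m + a * j) x) r =
      (lam + 2 * l + 1) * (d j * M (m + a * j)) +
        ((2 * j - 2 * l) * d j * M (m + a * j) - a * j * (lam + j) * d j * M (m + a * j - a)) := by
    rw [radialOp_const_mul, radialOp_rpowExp ν m ha _ hr]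
    field_simp
    linear_combination (j * d j * M (m + a * j - a) * a - d j * M (m + a * j)) * hν
  have htelescope : ∑ j ∈ range (l + 1), a * j * (lam + j) * d j * M (m + a * j - a) =
      ∑ j ∈ range (l + 1), (2 * j - 2 * l) * d j * M (m + a * j) := by
    rw [sum_range_succ', sum_range_succ]
    simp only [CharP.cast_eq_zero, mul_zero, zero_mul, add_zero, sub_self]
    refine sum_congr rfl fun j hj => ?_
    rw [hrec j (mem_range.1 hj)]
    congr 2
    push_cast
    ring
  show radialOp ν a m (fun x => ∑ j ∈ range (l + 1), d j * rpowExp a (m + a * j) x) r = _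
  rw [radialOp_sum ν a m _ fun j _ => contDiffAt_const.mul (contDiffAt_rpowExp a _ hr)]
  simp only [hterm, sum_add_distrib, sum_sub_distrib, htelescope, sub_self, add_zero, ← mul_sum]
  rfl

/-- `f_l` is an eigenfunction of `π(𝐤) = (1/a)(r^a - r^{-a}(ϑ - m)(ϑ + ν + m))`
with eigenvalue `λ + 2l + 1`, where `λ = (ν + 2m)/a`. -/
theorem laguerreFun_eigenfunction (ν a : ℝ) (ha : 0 < a) (m : ℕ)
    (hlam : -1 < (ν + 2 * m) / a) (l : ℕ) (r : ℝ) (hr : 0 < r) :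
    (1 / (a : ℂ)) *
        (((r ^ a : ℝ) : ℂ) * laguerreFun ν a m l r -
          ((r ^ (-a) : ℝ) : ℂ) *
            ((r : ℂ) ^ 2 * deriv (deriv (laguerreFun ν a m l)) r +
              ((ν : ℂ) + 1) * (r : ℂ) * deriv (laguerreFun ν a m l) r -
              (m : ℂ) * ((ν : ℂ) + (m : ℂ)) * laguerreFun ν a m l r))
      = (((ν + 2 * m) / a : ℝ) + 2 * l + 1 : ℂ) * laguerreFun ν a m l r := by
  set lam := (ν + 2 * m) / a
  set C := Real.sqrt ((2 : ℝ) ^ (lam + 1) * l.factorial / (a ^ lam * Real.Gamma (lam + l + 1)))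
  set F : ℝ → ℝ := fun x => C * laguerreRadial a lam m l x
  have hF : laguerreFun ν a m l =ᶠ[𝓝 r] fun x => (F x : ℂ) := by
    filter_upwards [Ioi_mem_nhds hr] with x hx
    simp only [laguerreFun, F, C, lam, ← pow_mul_laguerre_mul_exp hx, mul_assoc]
  have hν : a * lam = ν + 2 * m := mul_div_cancel₀ _ ha.ne'
  have heigen : radialOp ν a m F r = (lam + 2 * l + 1) * F r := by
    rw [radialOp_const_mul, radialOp_laguerreRadial ν ha.ne' hlam hν l hr]
    ring
  rw [hF.deriv.deriv_eq, hF.deriv_eq, hF.eq_of_nhds, deriv_ofReal_comp, deriv_ofReal_comp]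
  beta_reduce
  unfold radialOp at heigen
  exact_mod_cast congrArg ((↑) : ℝ → ℂ) heigen
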